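/- Every orientation of the complete graph K_4 on four vertices admits a pushable homomorphism to the Paley tournament Pal_7. -/

import Mathlib

/-- An oriented graph: a loopless directed graph without opposite arcs. -/
structure OrientedGraph (V : Type*) where
  adj : V → V → Prop
  irrefl' : ∀ v, ¬ adj v v
  asymm' : ∀ u v, adj u v → ¬ adj v u

namespace OrientedGraph

variable {V W : Type*}

/-- Pushing a set `S` of vertices reverses every arc with exactly one endpoint in `S`. -/
def push (G : OrientedGraph V) (S : Set V) : OrientedGraph V where
  adj u v := ((u ∈ S ↔ v ∈ S) ∧ G.adj u v) ∨ (¬(u ∈ S ↔ v ∈ S) ∧ G.adj v u)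
  irrefl' v := by
    rintro (⟨_, h⟩ | ⟨h, _⟩)
    · exact G.irrefl' v h
    · exact h Iff.rfl
  asymm' u v := by
    rintro (⟨h1, h2⟩ | ⟨h1, h2⟩) (⟨h3, h4⟩ | ⟨h3, h4⟩)
    · exact G.asymm' u v h2 h4
    · exact h3 h1.symm
    · exact h1 h3.symm
    · exact G.asymm' v u h2 h4

/-- A homomorphism of oriented graphs. -/
def IsHom (G : OrientedGraph V) (H : OrientedGraph W) (f : V → W) : Prop :=
  ∀ u v, G.adj u v → H.adj (f u) (f v)

/-- A pushable homomorphism: a homomorphism from some graph obtained from `G`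
by pushing a set of vertices. -/
def IsPushableHom (G : OrientedGraph V) (H : OrientedGraph W) (f : V → W) : Prop :=
  ∃ S : Set V, IsHom (G.push S) H f

/-- The underlying (simple) undirected graph of an oriented graph. -/
def toSimpleGraph (G : OrientedGraph V) : SimpleGraph V where
  Adj u v := G.adj u v ∨ G.adj v u
  symm := ⟨fun _ _ h => Or.symm h⟩
  loopless := ⟨fun v h => Or.elim h (G.irrefl' v) (G.irrefl' v)⟩

/-- The oriented chromatic number: the least order of an oriented graph that `G`
admits a homomorphism to. -/
noncomputable def orientedChromatic (G : OrientedGraph V) : ℕ :=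
  sInf {n | ∃ (H : OrientedGraph (Fin n)) (f : V → Fin n), IsHom G H f}

/-- The pushable chromatic number: the least order of an oriented graph that `G`
admits a pushable homomorphism to. -/
noncomputable def pushableChromatic (G : OrientedGraph V) : ℕ :=
  sInf {n | ∃ (H : OrientedGraph (Fin n)) (f : V → Fin n), IsPushableHom G H f}

/-- `signedAdj C true u w` means `w ∈ N⁺(u)`; `signedAdj C false u w` means `w ∈ N⁻(u)`. -/
def signedAdj (C : OrientedGraph V) : Bool → V → V → Prop
  | true, u, w => C.adj u w
  | false, u, w => C.adj w u

/-- The `s`-neighborhood of a set of vertices. -/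
def signedNbhd (C : OrientedGraph V) (s : Bool) (S : Set V) : Set V :=
  {w | ∃ u ∈ S, C.signedAdj s u w}

/-- The set `N^a(J)` for a sign vector `a` and a tuple `v` of vertices. -/
def NSet (C : OrientedGraph V) {j : ℕ} (a : Fin j → Bool) (v : Fin j → V) : Set V :=
  {w | (∀ i, C.signedAdj (a i) (v i) w) ∨ (∀ i, C.signedAdj (!(a i)) (v i) w)}

/-- Property `P(j,k)`: for every sign vector `a ∈ {+,-}^j` and every set of `j`
distinct vertices, `|N^a(J)| ≥ k`. -/
def HasPropP (C : OrientedGraph V) (j k : ℕ) : Prop :=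
  ∀ (a : Fin j → Bool) (v : Fin j → V), Function.Injective v → k ≤ (C.NSet a v).ncard

end OrientedGraph

/-- The Paley tournament on `ZMod 7`: `ij` is an arc iff `j - i ∈ {1, 2, 4}`. -/
def Pal7 : OrientedGraph (ZMod 7) where
  adj i j := j - i = 1 ∨ j - i = 2 ∨ j - i = 4
  irrefl' := by decide
  asymm' := by decide

/-- `mad(G) < 3`: every nonempty subgraph `H` satisfies `2|E(H)|/|V(H)| < 3`. -/
def MadLT3 {V : Type*} (G : SimpleGraph V) : Prop :=
  ∀ H : G.Subgraph, H.verts.Nonempty → 2 * H.edgeSet.ncard < 3 * H.verts.ncard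

/-- Degeneracy at most `d`: every nonempty set of vertices contains a vertex with
at most `d` neighbors inside the set. -/
def DegeneracyLE {V : Type*} (G : SimpleGraph V) (d : ℕ) : Prop :=
  ∀ s : Set V, s.Nonempty → ∃ v ∈ s, (s ∩ G.neighborSet v).ncard ≤ d

/-!
Pushing the in-neighbours of a vertex turns it into a source, and pushing twice is pushing the
symmetric difference, so we may assume `0 → 1, 2, 3`. What is left is the orientation of the
triangle `1, 2, 3`: eight cases, each settled by an explicit homomorphism into the antitwinned
graph `ρ(Pal₇)`, which encodes the push set.
-/

namespace OrientedGraph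

variable {V W : Type*}

instance [Fintype V] {G : OrientedGraph V} {H : OrientedGraph W} [DecidableRel G.adj]
    [DecidableRel H.adj] (f : V → W) : Decidable (G.IsHom H f) :=
  inferInstanceAs (Decidable (∀ u v, G.adj u v → H.adj (f u) (f v)))

theorem IsPushableHom.of_push {G : OrientedGraph V} {H : OrientedGraph W} {f : V → W}
    {S : Set V} (h : (G.push S).IsPushableHom H f) : G.IsPushableHom H f := by
  obtain ⟨T, hT⟩ := h
  refine ⟨symmDiff S T, fun u v huv => hT u v ?_⟩
  simp only [push, Set.mem_symmDiff] at huv ⊢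
  tauto

theorem exists_push_isSource (G : OrientedGraph V) (v : V) :
    ∃ S : Set V, ∀ w, ¬(G.push S).adj w v := by
  refine ⟨{w | G.adj w v}, fun w hw => ?_⟩
  simp only [push, Set.mem_ofPred_eq] at hw
  rcases hw with ⟨hwv, hadj⟩ | ⟨hwv, hadj⟩
  · exact G.irrefl' v (hwv.1 hadj)
  · exact hwv ⟨fun h => (G.asymm' v w hadj h).elim, fun h => (G.irrefl' v h).elim⟩

/-- The antitwinned graph `ρ(H)`: a homomorphism to it is a pushable homomorphism to `H`
whose push set is read off the second coordinate. -/
def pushCover (H : OrientedGraph W) : OrientedGraph (W × Bool) where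
  adj x y := if x.2 = y.2 then H.adj x.1 y.1 else H.adj y.1 x.1
  irrefl' x := by simpa using H.irrefl' x.1
  asymm' x y := by
    by_cases hxy : x.2 = y.2
    · simpa [hxy] using H.asymm' x.1 y.1
    · simpa [hxy, Ne.symm hxy] using H.asymm' y.1 x.1

instance (H : OrientedGraph W) [DecidableRel H.adj] : DecidableRel H.pushCover.adj :=
  fun _ _ => inferInstanceAs (Decidable (ite _ _ _))

theorem isPushableHom_of_isHom_pushCover {G : OrientedGraph V} {H : OrientedGraph W}
    {g : V → W × Bool} (hg : G.IsHom H.pushCover g) : G.IsPushableHom H (Prod.fst ∘ g) := by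
  refine ⟨{v | (g v).2}, fun u v huv => ?_⟩
  simp only [push, Set.mem_ofPred_eq, ← Bool.eq_iff_iff] at huv
  rcases huv with ⟨hsame, hadj⟩ | ⟨hdiff, hadj⟩
  · simpa [pushCover, hsame] using hg u v hadj
  · simpa [pushCover, Ne.symm hdiff] using hg v u hadj

/-- The tournament with arc `i → j` when `i < j` and `o i j`; only entries above the diagonal
matter. -/
def ofOrientation {n : ℕ} (o : Fin n → Fin n → Bool) : OrientedGraph (Fin n) where
  adj u v := u < v ∧ o u v = true ∨ v < u ∧ o v u = false
  irrefl' _ := by simp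
  asymm' _ _ := by grind

instance {n : ℕ} (o : Fin n → Fin n → Bool) : DecidableRel (ofOrientation o).adj :=
  fun _ _ => inferInstanceAs (Decidable (_ ∨ _))

theorem adj_ofOrientation {n : ℕ} {G : OrientedGraph (Fin n)} {o : Fin n → Fin n → Bool}
    (hfwd : ∀ i j, i < j → G.adj i j → o i j = true)
    (hbwd : ∀ i j, i < j → G.adj j i → o i j = false) {u v : Fin n} (h : G.adj u v) :
    (ofOrientation o).adj u v := by
  rcases lt_trichotomy u v with huv | rfl | hvu
  · exact Or.inl ⟨huv, hfwd u v huv h⟩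
  · exact (G.irrefl' u h).elim
  · exact Or.inr ⟨hvu, hbwd v u hvu h⟩

end OrientedGraph

open OrientedGraph

instance : DecidableRel Pal7.adj := fun _ _ => inferInstanceAs (Decidable (_ ∨ _ ∨ _))

def sourceOrientation (b₁₂ b₁₃ b₂₃ : Bool) : Fin 4 → Fin 4 → Bool :=
  ![![false, true, true, true], ![false, false, b₁₂, b₁₃],
    ![false, false, false, b₂₃], ![false, false, false, false]]

/- A cyclic triangle goes onto the cyclic triangle `N⁺(0) = {1, 2, 4}`; a transitive triangle
`a → b → c` goes to `a ↦ 1`, `c ↦ 2`, with its middle vertex pushed and sent to `6`. -/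
theorem exists_isHom_ofSourceOrientation_pushCover_pal7 (b₁₂ b₁₃ b₂₃ : Bool) :
    ∃ g, (ofOrientation (sourceOrientation b₁₂ b₁₃ b₂₃)).IsHom Pal7.pushCover g := by
  cases b₁₂ <;> cases b₁₃ <;> cases b₂₃
  exacts [⟨![(0, false), (2, false), (6, true), (1, false)], by decide⟩,
    ⟨![(0, false), (2, false), (1, false), (6, true)], by decide⟩,
    ⟨![(0, false), (1, false), (4, false), (2, false)], by decide⟩,
    ⟨![(0, false), (6, true), (1, false), (2, false)], by decide⟩,
    ⟨![(0, false), (6, true), (2, false), (1, false)], by decide⟩,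
    ⟨![(0, false), (1, false), (2, false), (4, false)], by decide⟩,
    ⟨![(0, false), (1, false), (2, false), (6, true)], by decide⟩,
    ⟨![(0, false), (1, false), (6, true), (2, false)], by decide⟩]

theorem exists_isPushableHom_pal7_of_isSource (G : OrientedGraph (Fin 4))
    (hsource : ∀ w, ¬G.adj w 0) : ∃ f, G.IsPushableHom Pal7 f := by
  classical
  obtain ⟨g, hg⟩ := exists_isHom_ofSourceOrientation_pushCover_pal7
    (decide (G.adj 1 2)) (decide (G.adj 1 3)) (decide (G.adj 2 3))
  set o := sourceOrientation (decide (G.adj 1 2)) (decide (G.adj 1 3)) (decide (G.adj 2 3))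
  have hfwd : ∀ i j, i < j → G.adj i j → o i j = true := by
    intro i j hij hadj
    fin_cases i <;> fin_cases j <;> simp_all [o, sourceOrientation]
  have hbwd : ∀ i j, i < j → G.adj j i → o i j = false := by
    intro i j hij hadj
    have hnot := G.asymm' j i hadj
    fin_cases i <;> fin_cases j <;> simp_all [o, sourceOrientation]
  exact ⟨_, isPushableHom_of_isHom_pushCover fun u v huv =>
    hg u v (adj_ofOrientation hfwd hbwd huv)⟩

theorem k4_pushableHom_pal7_general
    (G : OrientedGraph (Fin 4)) :
    ∃ f : Fin 4 → ZMod 7, G.IsPushableHom Pal7 f := by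
  obtain ⟨S, hS⟩ := G.exists_push_isSource 0
  obtain ⟨f, hf⟩ := exists_isPushableHom_pal7_of_isSource (G.push S) hS
  exact ⟨f, hf.of_push⟩

/-- Every orientation of `K₄` admits a pushable homomorphism to `Pal7`. -/
theorem k4_pushableHom_pal7
    (G : OrientedGraph (Fin 4)) (h : G.toSimpleGraph = ⊤) :
    ∃ f : Fin 4 → ZMod 7, G.IsPushableHom Pal7 f :=
  k4_pushableHom_pal7_general G
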